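/- Geometric-series lower bound for the Green's function: for a finite Markov chain, a state Δ, and T, L > 0 with L ≤ T, letting R_T(Δ) = Σ_{s=0}^T P^s(Δ,Δ) and p = P(τ_Δ⁺ ≤ L | X_0 = Δ) (return to Δ within L steps), one has R_T(Δ) ≥ Σ_{i=0}^{⌊T/L⌋} p^i, and R_T(Δ) ≤ (1 − P(τ_Δ⁺ ≤ T | X_0 = Δ))^{-1}. -/

import Mathlib

/-!
Killing the chain on arrival at `Δ` (zeroing the column of `Δ` gives `Q`) and telescoping
`P ^ (t + 1) - Q ^ (t + 1)` splits a return at time `t + 1` according to the first return time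
`r + 1`, which has probability `f r = (Q ^ r * P) Δ Δ`. Summing over `t` gives the renewal
equation `R t = 1 + ∑_{r < t} f r * R (t - 1 - r)`. As `R` is monotone, bounding `R (t - 1 - r)`
above by `R t` gives `R t ≤ 1 + p_t * R t`, and bounding the first `L` terms below by `R (t - L)`
gives `R t ≥ 1 + p_L * R (t - L)`, which iterates `⌊t / L⌋` times.
-/

open Finset

theorem pow_succ_eq_pow_succ_add_sum {α : Type*} [Ring α] (P Q : α) (t : ℕ) :
    P ^ (t + 1) = Q ^ (t + 1) + ∑ r ∈ range (t + 1), Q ^ r * (P - Q) * P ^ (t - r) := by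
  induction t with
  | zero => simp
  | succ t ih =>
    calc P ^ (t + 1 + 1) = Q * P ^ (t + 1) + (P - Q) * P ^ (t + 1) := by
          rw [pow_succ' P (t + 1)]; noncomm_ring
      _ = Q * (Q ^ (t + 1) + ∑ r ∈ range (t + 1), Q ^ r * (P - Q) * P ^ (t - r))
            + (P - Q) * P ^ (t + 1) := by rw [← ih]
      _ = _ := by
          rw [sum_range_succ' _ (t + 1)]
          simp only [mul_add, mul_sum, ← pow_succ', ← mul_assoc, Nat.add_sub_add_right, pow_zero,
            one_mul, tsub_zero]
          abel

namespace Matrix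

variable {V α : Type*} [Fintype V] [DecidableEq V] [Ring α]

theorem mul_sub_updateCol_zero_mul_apply (M P N : Matrix V V α) (Δ x y : V) :
    (M * (P - P.updateCol Δ 0) * N) x y = (M * P) x Δ * N Δ y := by
  have hcol : ∀ w, (M * (P - P.updateCol Δ 0)) x w = if w = Δ then (M * P) x Δ else 0 := by
    intro w
    split_ifs with hw <;> simp [mul_apply, hw]
  simp [mul_apply (M := M * _), hcol]

theorem updateCol_zero_pow_succ_apply_self (P : Matrix V V α) (Δ x : V) (t : ℕ) :
    ((P.updateCol Δ 0) ^ (t + 1)) x Δ = 0 := by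
  simp [pow_succ, mul_apply]

theorem pow_succ_apply_eq_sum_updateCol_zero_pow_mul_apply (P : Matrix V V α) (Δ x : V) (t : ℕ) :
    (P ^ (t + 1)) x Δ =
      ∑ r ∈ range (t + 1), ((P.updateCol Δ 0) ^ r * P) x Δ * (P ^ (t - r)) Δ Δ := by
  rw [pow_succ_eq_pow_succ_add_sum P (P.updateCol Δ 0), add_apply,
    updateCol_zero_pow_succ_apply_self, zero_add, sum_apply]
  simp only [mul_sub_updateCol_zero_mul_apply]

end Matrix

theorem sum_range_succ_eq_add_sum_mul_of_renewal {α : Type*} [Semiring α] {u f : ℕ → α}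
    (h : ∀ t, u (t + 1) = ∑ r ∈ range (t + 1), f r * u (t - r)) (t : ℕ) :
    ∑ s ∈ range (t + 1), u s =
      u 0 + ∑ r ∈ range t, f r * ∑ s ∈ range (t - 1 - r + 1), u s := by
  calc ∑ s ∈ range (t + 1), u s
      = u 0 + ∑ s ∈ Ico 0 t, ∑ r ∈ Ico 0 (s + 1), f r * u (s - r) := by
        rw [sum_range_succ', add_comm]
        simp only [h, range_eq_Ico]
    _ = u 0 + ∑ r ∈ range t, f r * ∑ s ∈ range (t - 1 - r + 1), u s := by
        rw [← sum_Ico_Ico_comm, ← range_eq_Ico]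
        refine congrArg _ (sum_congr rfl fun r hr => ?_)
        rw [mul_sum, sum_Ico_eq_sum_range, show t - 1 - r + 1 = t - r by grind]
        simp only [add_tsub_cancel_left]

theorem one_le_of_renewal {α : Type*} [Semiring α] [Preorder α] {f R : ℕ → α}
    (hR_mono : Monotone R) (hR : ∀ t, R t = 1 + ∑ r ∈ range t, f r * R (t - 1 - r)) (t : ℕ) :
    1 ≤ R t := by
  have h0 : R 0 = 1 := by rw [hR 0, sum_range_zero, add_zero]
  exact h0 ▸ hR_mono t.zero_le

section Renewal

variable {α : Type*} [Field α] [LinearOrder α] [IsStrictOrderedRing α] {f R : ℕ → α}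

theorem one_add_sum_mul_le_of_renewal (hf : ∀ r, 0 ≤ f r) (hR_mono : Monotone R)
    (hR : ∀ t, R t = 1 + ∑ r ∈ range t, f r * R (t - 1 - r)) {L t : ℕ} (hLt : L ≤ t) :
    1 + (∑ r ∈ range L, f r) * R (t - L) ≤ R t := by
  rw [hR t, sum_mul]
  gcongr 1 + ?_
  calc ∑ r ∈ range L, f r * R (t - L)
      ≤ ∑ r ∈ range L, f r * R (t - 1 - r) := by
        gcongr with r hr
        · exact hf r
        · exact hR_mono (by grind)
    _ ≤ ∑ r ∈ range t, f r * R (t - 1 - r) :=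
        sum_le_sum_of_subset_of_nonneg (range_subset_range.mpr hLt) fun r _ _ =>
          mul_nonneg (hf r) (zero_le_one.trans (one_le_of_renewal hR_mono hR _))

theorem geom_sum_le_of_renewal (hf : ∀ r, 0 ≤ f r) (hR_mono : Monotone R)
    (hR : ∀ t, R t = 1 + ∑ r ∈ range t, f r * R (t - 1 - r)) (L t : ℕ) :
    ∑ i ∈ range (t / L + 1), (∑ r ∈ range L, f r) ^ i ≤ R t := by
  set p := ∑ r ∈ range L, f r
  have hp : 0 ≤ p := sum_nonneg fun r _ => hf r
  suffices ∀ n t, n * L ≤ t → ∑ i ∈ range (n + 1), p ^ i ≤ R t from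
    this _ _ (Nat.div_mul_le_self t L)
  intro n
  induction n with
  | zero => simpa using one_le_of_renewal hR_mono hR
  | succ n ih =>
    intro t hnt
    rw [Nat.succ_mul] at hnt
    calc ∑ i ∈ range (n + 1 + 1), p ^ i = p * ∑ i ∈ range (n + 1), p ^ i + 1 := geom_sum_succ
      _ ≤ p * R (t - L) + 1 := by gcongr; exact ih _ (by omega)
      _ ≤ R t := by linarith [one_add_sum_mul_le_of_renewal hf hR_mono hR (by omega : L ≤ t)]

theorem le_inv_one_sub_of_renewal (hf : ∀ r, 0 ≤ f r) (hR_mono : Monotone R)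
    (hR : ∀ t, R t = 1 + ∑ r ∈ range t, f r * R (t - 1 - r)) {t : ℕ}
    (ht : ∑ r ∈ range t, f r < 1) :
    R t ≤ (1 - ∑ r ∈ range t, f r)⁻¹ := by
  have hle : R t ≤ 1 + (∑ r ∈ range t, f r) * R t := by
    rw [sum_mul]
    nth_rewrite 1 [hR t]
    gcongr with r hr
    · exact hf r
    · exact hR_mono (by omega)
  rw [← one_div, le_div_iff₀ (by linarith)]
  linarith

end Renewal

theorem voter_rrg_stmt17_general
    {V : Type*} [Fintype V] [DecidableEq V]
    (P : Matrix V V ℝ)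
    (hPnn : ∀ x y, 0 ≤ P x y)
    (Δ : V) (T L : ℕ)
    (Q : Matrix V V ℝ) (hQ : ∀ x y, Q x y = if y = Δ then 0 else P x y)
    (ret : ℕ → ℝ) (hret : ∀ r, ret r = (Q ^ (r - 1) * P) Δ Δ)
    (p : ℕ → ℝ) (hp : ∀ l, p l = ∑ r ∈ Finset.Icc 1 l, ret r)
    (R : ℕ → ℝ) (hR : ∀ t, R t = ∑ s ∈ Finset.range (t + 1), (P ^ s) Δ Δ)
    (hpT : p T < 1) :
    (∑ i ∈ Finset.range (T / L + 1), (p L) ^ i) ≤ R T ∧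
    R T ≤ (1 - p T)⁻¹ := by
  obtain rfl : Q = P.updateCol Δ 0 := by ext x y; simp [hQ, Matrix.updateCol_apply]
  set f : ℕ → ℝ := fun r => ((P.updateCol Δ 0) ^ r * P) Δ Δ
  have hpf : ∀ l, p l = ∑ r ∈ range l, f r := by
    intro l
    rw [hp, ← Ico_add_one_right_eq_Icc, sum_Ico_eq_sum_range]
    simp [f, hret, add_comm]
  have hQnn : ∀ x y, 0 ≤ P.updateCol Δ 0 x y := fun x y => by
    rw [Matrix.updateCol_apply]; split_ifs <;> simp [hPnn]
  have hf : ∀ r, 0 ≤ f r := fun r =>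
    sum_nonneg fun z _ => mul_nonneg (Matrix.pow_apply_nonneg hQnn r Δ z) (hPnn z Δ)
  have hR_mono : Monotone R := monotone_nat_of_le_succ fun t => by
    rw [hR, hR, sum_range_succ _ (t + 1)]
    exact le_add_of_nonneg_right (Matrix.pow_apply_nonneg hPnn _ Δ Δ)
  have hrenewal : ∀ t, R t = 1 + ∑ r ∈ range t, f r * R (t - 1 - r) := by
    intro t
    rw [hR, sum_range_succ_eq_add_sum_mul_of_renewal
      (Matrix.pow_succ_apply_eq_sum_updateCol_zero_pow_mul_apply P Δ Δ)]
    simp [hR, f]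
  simp only [hpf] at hpT ⊢
  exact ⟨geom_sum_le_of_renewal hf hR_mono hrenewal L T,
    le_inv_one_sub_of_renewal hf hR_mono hrenewal hpT⟩

/-- Geometric-series bounds for the Green's function of a finite Markov chain.  Let `P`
be a stochastic matrix on a finite state space, `Δ` a state, and let
`R_T(Δ) = Σ_{s=0}^T P^s(Δ,Δ)`.  The distribution of the first return time to `Δ` is
`P(τ_Δ⁺ = r | X_0 = Δ) = (Q^{r-1}·P)(Δ,Δ)`, where `Q` is `P` with the column of `Δ`
zeroed out (the walk killed upon hitting `Δ`); write `p_L = P(τ_Δ⁺ ≤ L | X_0 = Δ)`.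
Then for `1 ≤ L ≤ T`:  `R_T(Δ) ≥ Σ_{i=0}^{⌊T/L⌋} p_L^i`, and, provided
`P(τ_Δ⁺ ≤ T | X_0 = Δ) < 1`, also `R_T(Δ) ≤ (1 − P(τ_Δ⁺ ≤ T | X_0 = Δ))⁻¹`. -/
theorem voter_rrg_stmt17
    {V : Type*} [Fintype V] [DecidableEq V]
    (P : Matrix V V ℝ)
    (hPnn : ∀ x y, 0 ≤ P x y) (hProw : ∀ x, ∑ y, P x y = 1)
    (Δ : V) (T L : ℕ) (hL : 1 ≤ L) (hLT : L ≤ T)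
    (Q : Matrix V V ℝ) (hQ : ∀ x y, Q x y = if y = Δ then 0 else P x y)
    (ret : ℕ → ℝ) (hret : ∀ r, ret r = (Q ^ (r - 1) * P) Δ Δ)
    (p : ℕ → ℝ) (hp : ∀ l, p l = ∑ r ∈ Finset.Icc 1 l, ret r)
    (R : ℕ → ℝ) (hR : ∀ t, R t = ∑ s ∈ Finset.range (t + 1), (P ^ s) Δ Δ)
    (hpT : p T < 1) :
    (∑ i ∈ Finset.range (T / L + 1), (p L) ^ i) ≤ R T ∧
    R T ≤ (1 - p T)⁻¹ :=
  voter_rrg_stmt17_general P hPnn Δ T L Q hQ ret hret p hp R hR hpT
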